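/- Let M be a matroid on a finite linearly ordered ground set E. Then for all elements x, u, y, v of a commutative ring, Σ_{A⊆E} (x+u−1)^{r(M)−r_M(A)} · (y+v−1)^{|A|−r_M(A)} = Σ_{A⊆E} x^{|Int_M(A)|} · u^{r(M)−r_M(A)} · y^{|Ext_M(A)|} · v^{|A|−r_M(A)}. -/

import Mathlib

/-- A circuit of a matroid: a minimal dependent set. -/
def Matroid.IsCircuit' {α : Type*} (M : Matroid α) (C : Set α) : Prop :=
  M.Dep C ∧ ∀ D, M.Dep D → D ⊆ C → D = C

/-- A cocircuit of a matroid: a circuit of the dual matroid. -/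
def Matroid.IsCocircuit' {α : Type*} (M : Matroid α) (C : Set α) : Prop :=
  M✶.IsCircuit' C

/-- The rank of a set in a matroid: the largest cardinality of an independent subset. -/
noncomputable def Matroid.rk' {α : Type*} (M : Matroid α) (A : Set α) : ℕ :=
  sSup {n : ℕ | ∃ I, I ⊆ A ∧ M.Indep I ∧ I.ncard = n}

/-- `e` is the minimum element of the set `C`. -/
def IsMinOf {α : Type*} [LinearOrder α] (C : Set α) (e : α) : Prop :=
  e ∈ C ∧ ∀ x ∈ C, e ≤ x

/-- `Int_M(A)`: internally active elements of `A` w.r.t. `M`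
(the ground set is the whole type, so `E ∖ A = Aᶜ`). -/
def IntSet {α : Type*} [LinearOrder α] (M : Matroid α) (A : Set α) : Set α :=
  {e | e ∈ A ∧ ∃ C, M.IsCocircuit' C ∧ C ⊆ Aᶜ ∪ {e} ∧ IsMinOf C e}

/-- `Ext_M(A)`: externally active elements w.r.t. `M`. -/
def ExtSet {α : Type*} [LinearOrder α] (M : Matroid α) (A : Set α) : Set α :=
  {e | e ∉ A ∧ ∃ C, M.IsCircuit' C ∧ C ⊆ A ∪ {e} ∧ IsMinOf C e}

/-- `P_M(A)`: smallest elements of cocircuits of `M` contained in `E ∖ A`. -/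
def PActSet {α : Type*} [LinearOrder α] (M : Matroid α) (A : Set α) : Set α :=
  {e | e ∉ A ∧ ∃ C, M.IsCocircuit' C ∧ C ⊆ Aᶜ ∧ IsMinOf C e}

/-- `Q_M(A)`: smallest elements of circuits of `M` contained in `A`. -/
def QActSet {α : Type*} [LinearOrder α] (M : Matroid α) (A : Set α) : Set α :=
  {e | e ∈ A ∧ ∃ C, M.IsCircuit' C ∧ C ⊆ A ∧ IsMinOf C e}

/-!
Crapo's interval partition. Order the ground set so that the elements of `A` come first, in
decreasing order, followed by the others in increasing order. The greedy base `B` for this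
order is the unique base with `B \ Int(B) ⊆ A ⊆ B ∪ Ext(B)`, so the subsets of `E` are
partitioned into the intervals `[B \ Int(B), B ∪ Ext(B)]`, one for each base `B`. Inside the
interval of `B`, put `I = B \ A` and `X = A \ B`: then `B ∩ A` is a basis of `A`, so
`r(E) - r(A) = |I|` and `|A| - r(A) = |X|`, while `Int(A) = Int(B) \ I` and
`Ext(A) = Ext(B) \ X`. Summing over the interval, both sides of the identity become
`∑_B (x + u)^|Int(B)| (y + v)^|Ext(B)|`. The claims about internal activity are dual to the
claims about external activity, because `Int_M(A) = Ext_{M*}(E \ A)`.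
-/

namespace Finset

lemma sum_pow_card_sdiff {α R : Type*} [Fintype α] [DecidableEq α] [CommSemiring R]
    {B P Q : Finset α} (hP : P ⊆ B) (hQ : Disjoint Q B) (a b c d : R) :
    ∑ A with B \ A ⊆ P ∧ A \ B ⊆ Q,
      b ^ #(B \ A) * a ^ (#P - #(B \ A)) * (d ^ #(A \ B) * c ^ (#Q - #(A \ B))) =
    (b + a) ^ #P * (d + c) ^ #Q := by
  rw [← sum_pow_mul_eq_add_pow, ← sum_pow_mul_eq_add_pow, sum_mul_sum, ← sum_product']
  refine sum_nbij' (fun A ↦ (B \ A, A \ B)) (fun p ↦ (B \ p.1) ∪ p.2) ?_ ?_ ?_ ?_ ?_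
  · simp
  · rintro ⟨I, X⟩ h
    simp only [mem_product, mem_powerset] at h
    simp only [mem_filter, mem_univ, true_and]
    constructor <;> intro x <;> simp only [mem_sdiff, mem_union] <;> grind [disjoint_left]
  · intro A _
    ext x
    simp only [mem_sdiff, mem_union]
    tauto
  · simp only [mem_product, mem_powerset, Prod.forall, Prod.mk.injEq]
    rintro I X ⟨hI, hX⟩
    constructor <;> ext x <;> simp only [mem_sdiff, mem_union] <;> grind [disjoint_left]
  · simp

end Finset

open Set Function
open scoped Finset

namespace Matroid

variable {α : Type*} {M : Matroid α} {A B C : Set α} {e f g : α}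

lemma isCircuit'_iff : M.IsCircuit' C ↔ M.IsCircuit C :=
  isCircuit_iff.symm

lemma IsBase.compl_isBase_dual_of_ground_eq_univ (hB : M.IsBase B) (hE : M.E = univ) :
    M✶.IsBase Bᶜ := by
  simpa [hE, compl_eq_univ_sdiff] using hB.compl_isBase_dual

section LinearOrder

variable [LinearOrder α]

lemma intSet_eq_extSet_dual (M : Matroid α) (A : Set α) : IntSet M A = ExtSet M✶ Aᶜ := by
  ext e
  simp [IntSet, ExtSet, IsCocircuit']

lemma extSet_eq_intSet_dual (M : Matroid α) (A : Set α) : ExtSet M A = IntSet M✶ Aᶜ := by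
  rw [intSet_eq_extSet_dual, dual_dual, compl_compl]

lemma mem_extSet_iff_of_isBase (hE : M.E = univ) (hB : M.IsBase B) (hf : f ∉ B) :
    f ∈ ExtSet M B ↔ ∀ g ∈ M.fundCircuit f B, f ≤ g := by
  refine ⟨fun ⟨_, C, hC, hCB, hmin⟩ ↦ ?_, fun h ↦ ⟨hf, _, ?_, ?_, M.mem_fundCircuit f B, h⟩⟩
  · rw [isCircuit'_iff] at hC
    rw [union_singleton] at hCB
    rw [← hC.eq_fundCircuit_of_subset hB.indep hCB]
    exact hmin.2
  · exact isCircuit'_iff.2 (hB.fundCircuit_isCircuit (hE ▸ mem_univ f) hf)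
  · rw [union_singleton]
    exact M.fundCircuit_subset_insert f B

lemma mem_intSet_iff_of_isBase (hE : M.E = univ) (hB : M.IsBase B) (he : e ∈ B) :
    e ∈ IntSet M B ↔ ∀ f ∉ B, e ∈ M.fundCircuit f B → e ≤ f := by
  have hE' : M✶.E = univ := M.dual_ground.trans hE
  have hcc : M✶.fundCircuit e Bᶜ = M.fundCocircuit e B := by
    rw [fundCocircuit, dual_ground, hE, compl_eq_univ_sdiff]
  rw [intSet_eq_extSet_dual,
    mem_extSet_iff_of_isBase hE' (hB.compl_isBase_dual_of_ground_eq_univ hE) (not_not_intro he),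
    hcc]
  refine ⟨fun h f _ hf ↦ h f (hB.mem_fundCocircuit_iff_mem_fundCircuit.2 hf), fun h f hf ↦ ?_⟩
  obtain rfl | hfB := M.fundCocircuit_subset_insert_compl e B hf
  · exact le_rfl
  · exact h f hfB.2 (hB.mem_fundCocircuit_iff_mem_fundCircuit.1 hf)

-- `A ∈ M.crapoInterval B` says `B \ Int(B) ⊆ A ⊆ B ∪ Ext(B)`.
def crapoInterval (M : Matroid α) (B : Set α) : Set (Set α) :=
  {A | B \ A ⊆ IntSet M B ∧ A \ B ⊆ ExtSet M B}

lemma compl_mem_crapoInterval_dual :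
    Aᶜ ∈ M✶.crapoInterval Bᶜ ↔ A ∈ M.crapoInterval B := by
  simp only [crapoInterval, mem_ofPred_eq, compl_sdiff_compl, ← extSet_eq_intSet_dual,
    intSet_eq_extSet_dual M B, and_comm]

variable (hE : M.E = univ) (hB : M.IsBase B) (hA : A ∈ M.crapoInterval B)
include hE hB hA

lemma fundCircuit_subset_of_mem_crapoInterval (hf : f ∈ ExtSet M B) :
    M.fundCircuit f B ⊆ insert f (B ∩ A) := by
  intro g hg
  obtain rfl | hgB := M.fundCircuit_subset_insert f B hg
  · exact mem_insert g _
  refine mem_insert_of_mem f ⟨hgB, by_contra fun hgA ↦ hf.1 ?_⟩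
  have hgf : g ≤ f := (mem_intSet_iff_of_isBase hE hB hgB).1 (hA.1 ⟨hgB, hgA⟩) f hf.1 hg
  rwa [← le_antisymm hgf ((mem_extSet_iff_of_isBase hE hB hf.1).1 hf g hg)]

lemma isBasis_inter_of_mem_crapoInterval : M.IsBasis (B ∩ A) A := by
  refine (hB.indep.subset inter_subset_left).isBasis_of_forall_insert inter_subset_right ?_
  rintro e ⟨heA, heBA⟩
  have heB : e ∉ B := fun heB ↦ heBA ⟨heB, heA⟩
  refine (hB.fundCircuit_isCircuit (hE ▸ mem_univ e) heB).dep.superset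
    (fundCircuit_subset_of_mem_crapoInterval hE hB hA (hA.2 ⟨heA, heB⟩)) (hE ▸ subset_univ _)

lemma exists_mem_le_of_mem_crapoInterval (hC : M.IsCircuit C) (hCA : C ⊆ insert f A)
    (hfC : f ∈ C) (hg : g ∈ B) (hfg : f ∈ M.fundCocircuit g B) : ∃ h ∈ C, h ≠ f ∧ h ≤ g := by
  obtain ⟨h, ⟨hhC, hhK⟩, hhf⟩ :=
    (hC.isCocircuit_inter_nontrivial (fundCocircuit_isCocircuit hg hB) ⟨f, hfC, hfg⟩).exists_ne f
  refine ⟨h, hhC, hhf, ?_⟩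
  obtain rfl | ⟨-, hhB⟩ := M.fundCocircuit_subset_insert_compl g B hhK
  · exact le_rfl
  have hext : h ∈ ExtSet M B := hA.2 ⟨(hCA hhC).resolve_left hhf, hhB⟩
  exact (mem_extSet_iff_of_isBase hE hB hhB).1 hext g
    (hB.mem_fundCocircuit_iff_mem_fundCircuit.1 hhK)

lemma extSet_eq_sdiff_of_mem_crapoInterval : ExtSet M A = ExtSet M B \ A := by
  ext f
  refine ⟨fun ⟨hfA, C, hC, hCA, hmin⟩ ↦ ?_, fun ⟨hfB, hfA⟩ ↦ ?_⟩
  · rw [isCircuit'_iff] at hC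
    rw [union_singleton] at hCA
    have hlt : ∀ g ∈ B, f ∈ M.fundCocircuit g B → f < g := fun g hg hfg ↦ by
      obtain ⟨h, hhC, hhf, hhg⟩ :=
        exists_mem_le_of_mem_crapoInterval hE hB hA hC hCA hmin.1 hg hfg
      exact ((hmin.2 h hhC).lt_of_ne hhf.symm).trans_le hhg
    have hfB : f ∉ B := fun hfB ↦ (hlt f hfB (M.mem_fundCocircuit f B)).false
    refine ⟨(mem_extSet_iff_of_isBase hE hB hfB).2 fun g hg ↦ ?_, hfA⟩
    obtain rfl | hgB := M.fundCircuit_subset_insert f B hg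
    · exact le_rfl
    · exact (hlt g hgB (hB.mem_fundCocircuit_iff_mem_fundCircuit.2 hg)).le
  · refine ⟨hfA, _, isCircuit'_iff.2 (hB.fundCircuit_isCircuit (hE ▸ mem_univ f) hfB.1), ?_,
      M.mem_fundCircuit f B, (mem_extSet_iff_of_isBase hE hB hfB.1).1 hfB⟩
    rw [union_singleton]
    exact (fundCircuit_subset_of_mem_crapoInterval hE hB hA hfB).trans
      (insert_subset_insert inter_subset_right)

lemma intSet_eq_inter_of_mem_crapoInterval : IntSet M A = IntSet M B ∩ A := by
  rw [intSet_eq_extSet_dual, extSet_eq_sdiff_of_mem_crapoInterval (M.dual_ground.trans hE)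
    (hB.compl_isBase_dual_of_ground_eq_univ hE) (compl_mem_crapoInterval_dual.2 hA),
    ← intSet_eq_extSet_dual, sdiff_compl]

end LinearOrder

section Greedy

variable {β : Type*} [LinearOrder β] {key : α → β} {B' : Set α}

-- The base that the greedy algorithm picks when it scans the elements by increasing `key`.
def IsGreedyBase (M : Matroid α) (key : α → β) (B : Set α) : Prop :=
  M.IsBase B ∧ ∀ f ∉ B, ∀ g ∈ M.fundCircuit f B, key g ≤ key f

lemma exists_isGreedyBase [Fintype α] (hE : M.E = univ) (key : α → β) :
    ∃ B, M.IsGreedyBase key B := by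
  classical
  -- A base maximising `∑ w`, where `w x` counts the elements above `x`, admits no exchange
  -- that replaces an element by one of smaller key.
  let w : α → ℕ := fun x ↦ #{y | key x < key y}
  obtain ⟨B₀, hB₀⟩ := M.exists_isBase
  obtain ⟨B, hB, hmax⟩ := Finset.exists_max_image {B : Finset α | M.IsBase ↑B}
    (fun B ↦ ∑ x ∈ B, w x) ⟨B₀.toFinset, by simpa using hB₀⟩
  rw [Finset.mem_filter] at hB
  refine ⟨B, hB.2, fun f hf g hg ↦ not_lt.1 fun hlt ↦ ?_⟩
  obtain rfl | hgB := M.fundCircuit_subset_insert f B hg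
  · exact hlt.false
  have hexch : M.IsBase ↑((insert f B).erase g) := by
    rw [Finset.coe_erase, Finset.coe_insert]
    refine hB.2.exchange_isBase_of_indep' hgB hf ?_
    exact (hB.2.indep.mem_fundCircuit_iff (by simp [hB.2.closure_eq, hE]) hf).1 hg
  have hsum := hmax _ (Finset.mem_filter.2 ⟨Finset.mem_univ _, hexch⟩)
  have hsplit := Finset.add_sum_erase _ w (Finset.mem_insert_of_mem hgB : g ∈ insert f B)
  rw [Finset.sum_insert (by simpa using hf)] at hsplit
  have hw : w g < w f := Finset.card_lt_card <| (Finset.ssubset_iff_of_subset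
    (Finset.monotone_filter_right _ fun _ _ ↦ hlt.trans)).2 ⟨g, by simpa using hlt, by simp⟩
  omega

lemma IsGreedyBase.exists_mem_sdiff_key_lt (hB' : M.IsGreedyBase key B') (hkey : Injective key)
    (hB : M.IsBase B) (he : e ∈ B \ B') : ∃ g ∈ B' \ B, key g < key e := by
  have hC := hB'.1.fundCircuit_isCircuit (hB.subset_ground he.1) he.2
  obtain ⟨g, hgC, hgB⟩ := not_subset.1 fun h ↦ hC.not_indep (hB.indep.subset h)
  have hge : g ≠ e := fun h ↦ hgB (h ▸ he.1)
  refine ⟨g, ⟨(M.fundCircuit_subset_insert e B' hgC).resolve_left hge, hgB⟩, ?_⟩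
  exact (hB'.2 e he.2 g hgC).lt_of_ne (hkey.ne hge)

lemma IsGreedyBase.eq [Finite α] (hkey : Injective key) (hB : M.IsGreedyBase key B)
    (hB' : M.IsGreedyBase key B') : B = B' := by
  by_contra hne
  have hs : ((B \ B') ∪ (B' \ B)).Nonempty := by
    rw [nonempty_iff_ne_empty, Ne, union_empty_iff, sdiff_eq_empty, sdiff_eq_empty]
    exact fun h ↦ hne (h.1.antisymm h.2)
  obtain ⟨e, he, hmin⟩ := exists_min_image _ key (toFinite _) hs
  rcases he with he | he
  · obtain ⟨g, hg, hlt⟩ := hB'.exists_mem_sdiff_key_lt hkey hB.1 he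
    exact (hmin g (.inr hg)).not_gt hlt
  · obtain ⟨g, hg, hlt⟩ := hB.exists_mem_sdiff_key_lt hkey hB'.1 he
    exact (hmin g (.inl hg)).not_gt hlt

open scoped Classical in
noncomputable def activityKey (A : Set α) (x : α) : αᵒᵈ ⊕ₗ α :=
  if x ∈ A then toLex (.inl (OrderDual.toDual x)) else toLex (.inr x)

lemma activityKey_injective (A : Set α) : Injective (activityKey A) := by
  intro x y h
  by_cases hx : x ∈ A <;> by_cases hy : y ∈ A <;> simp_all [activityKey]

end Greedy

section Activity

variable [LinearOrder α]

lemma isGreedyBase_activityKey_iff (hE : M.E = univ) (hB : M.IsBase B) :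
    M.IsGreedyBase (activityKey A) B ↔ A ∈ M.crapoInterval B := by
  refine ⟨fun ⟨_, hkey⟩ ↦ ⟨fun g ⟨hgB, hgA⟩ ↦ ?_, fun f ⟨hfA, hfB⟩ ↦ ?_⟩, fun hA ↦ ⟨hB, ?_⟩⟩
  · refine (mem_intSet_iff_of_isBase hE hB hgB).2 fun f hfB hgf ↦ ?_
    have := hkey f hfB g hgf
    by_cases hfA : f ∈ A <;> simp_all [activityKey]
  · refine (mem_extSet_iff_of_isBase hE hB hfB).2 fun g hgf ↦ ?_
    have := hkey f hfB g hgf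
    by_cases hgA : g ∈ A <;> simp_all [activityKey]
  · intro f hfB g hgf
    obtain rfl | hgB := M.fundCircuit_subset_insert f B hgf
    · exact le_rfl
    have hint (hgA : g ∉ A) : g ≤ f :=
      (mem_intSet_iff_of_isBase hE hB hgB).1 (hA.1 ⟨hgB, hgA⟩) f hfB hgf
    have hext (hfA : f ∈ A) : f ≤ g :=
      (mem_extSet_iff_of_isBase hE hB hfB).1 (hA.2 ⟨hfA, hfB⟩) g hgf
    by_cases hgA : g ∈ A <;> by_cases hfA : f ∈ A
    · simpa [activityKey, hgA, hfA] using hext hfA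
    · simp [activityKey, hgA, hfA]
    · exact absurd (le_antisymm (hint hgA) (hext hfA) ▸ hgB) hfB
    · simpa [activityKey, hgA, hfA] using hint hgA

theorem existsUnique_isBase_mem_crapoInterval [Fintype α] (hE : M.E = univ) (A : Set α) :
    ∃! B, M.IsBase B ∧ A ∈ M.crapoInterval B := by
  obtain ⟨B, hB⟩ := M.exists_isGreedyBase hE (activityKey A)
  refine ⟨B, ⟨hB.1, (isGreedyBase_activityKey_iff hE hB.1).1 hB⟩, fun B' ⟨hB', hA⟩ ↦ ?_⟩
  exact ((isGreedyBase_activityKey_iff hE hB').2 hA).eq (activityKey_injective A) hB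

end Activity

section Rank

lemma rk'_eq_ncard [Finite α] {I : Set α} (hIA : M.IsBasis I A) : M.rk' A = I.ncard := by
  have hub : ∀ n ∈ {n | ∃ J, J ⊆ A ∧ M.Indep J ∧ J.ncard = n}, n ≤ I.ncard := by
    rintro n ⟨J, hJA, hJ, rfl⟩
    obtain ⟨J', hJ', hJJ'⟩ := hJ.subset_isBasis_of_subset hJA
    rw [ncard_def I, ← hJ'.encard_eq_encard hIA, ← ncard_def]
    exact ncard_le_ncard hJJ'
  exact le_antisymm (csSup_le ⟨0, ∅, empty_subset A, M.empty_indep, ncard_empty α⟩ hub)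
    (le_csSup ⟨I.ncard, hub⟩ ⟨I, hIA.subset, hIA.indep, rfl⟩)

variable [LinearOrder α] [Finite α] (hE : M.E = univ) (hB : M.IsBase B)
  (hA : A ∈ M.crapoInterval B)
include hE hB hA

lemma rk'_univ_sub_rk'_of_mem_crapoInterval : M.rk' univ - M.rk' A = (B \ A).ncard := by
  rw [rk'_eq_ncard (isBasis_inter_of_mem_crapoInterval hE hB hA),
    rk'_eq_ncard (hE ▸ hB.isBasis_ground), ← ncard_sdiff inter_subset_left, sdiff_self_inter]

lemma ncard_sub_rk'_of_mem_crapoInterval : A.ncard - M.rk' A = (A \ B).ncard := by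
  rw [rk'_eq_ncard (isBasis_inter_of_mem_crapoInterval hE hB hA),
    ← ncard_sdiff inter_subset_right, sdiff_inter_self_eq_sdiff]

lemma ncard_intSet_of_mem_crapoInterval :
    (IntSet M A).ncard = (IntSet M B).ncard - (B \ A).ncard := by
  rw [← ncard_sdiff hA.1, intSet_eq_inter_of_mem_crapoInterval hE hB hA]
  congr 1
  ext x
  have : x ∈ IntSet M B → x ∈ B := fun hx ↦ hx.1
  simp only [mem_inter_iff, mem_sdiff]
  tauto

lemma ncard_extSet_of_mem_crapoInterval :
    (ExtSet M A).ncard = (ExtSet M B).ncard - (A \ B).ncard := by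
  rw [← ncard_sdiff hA.2, extSet_eq_sdiff_of_mem_crapoInterval hE hB hA]
  congr 1
  ext x
  have : x ∈ ExtSet M B → x ∉ B := fun hx ↦ hx.1
  simp only [mem_sdiff]
  tauto

end Rank

section Sum

variable {R : Type*}

open scoped Classical in
lemma sum_eq_sum_isBase_sum_crapoInterval [LinearOrder α] [Fintype α] [AddCommMonoid R]
    (hE : M.E = univ) (t : Finset α → R) :
    ∑ A, t A = ∑ B ∈ Finset.univ.filter (fun B : Finset α ↦ M.IsBase ↑B),
      ∑ A with ↑A ∈ M.crapoInterval ↑B, t A := by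
  refine Eq.symm ((Finset.sum_comm' (t' := Finset.univ)
    (s' := fun A : Finset α ↦ Finset.univ.filter fun B : Finset α ↦
      M.IsBase ↑B ∧ ↑A ∈ M.crapoInterval ↑B) (by simp)).trans
    (Finset.sum_congr rfl fun A _ ↦ ?_))
  obtain ⟨B, hB, huniq⟩ := existsUnique_isBase_mem_crapoInterval hE (A : Set α)
  rw [Finset.sum_const, Finset.card_eq_one.2 ⟨B.toFinset, ?_⟩, one_smul]
  ext B'
  simp only [Finset.mem_filter, Finset.mem_univ, true_and, Finset.mem_singleton]
  refine ⟨fun h ↦ by simp [← huniq _ h], ?_⟩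
  rintro rfl
  simpa using hB

open scoped Classical in
lemma sum_crapoInterval_eq [LinearOrder α] [Fintype α] [CommSemiring R] (hE : M.E = univ)
    {B : Finset α} (hB : M.IsBase ↑B) (a b c d : R) :
    ∑ A ∈ Finset.univ.filter (fun A : Finset α ↦ ↑A ∈ M.crapoInterval ↑B),
      a ^ (IntSet M ↑A).ncard * b ^ (M.rk' univ - M.rk' ↑A) *
      c ^ (ExtSet M ↑A).ncard * d ^ (#A - M.rk' ↑A) =
    (a + b) ^ (IntSet M ↑B).ncard * (c + d) ^ (ExtSet M ↑B).ncard := by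
  have hmem (A : Finset α) : ↑A ∈ M.crapoInterval ↑B ↔
      B \ A ⊆ (IntSet M ↑B).toFinset ∧ A \ B ⊆ (ExtSet M ↑B).toFinset := by
    simp [crapoInterval, ← Finset.coe_subset]
  have hP : (IntSet M ↑B).toFinset ⊆ B := fun x hx ↦ by simpa using (Set.mem_toFinset.1 hx).1
  have hQ : Disjoint (ExtSet M ↑B).toFinset B :=
    Finset.disjoint_left.2 fun x hx ↦ by simpa using (Set.mem_toFinset.1 hx).1
  have hPc : (IntSet M ↑B).ncard = #(IntSet M ↑B).toFinset := ncard_eq_toFinset_card' _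
  have hQc : (ExtSet M ↑B).ncard = #(ExtSet M ↑B).toFinset := ncard_eq_toFinset_card' _
  rw [Finset.filter_congr fun A _ ↦ hmem A, hPc, hQc, add_comm a, add_comm c,
    ← Finset.sum_pow_card_sdiff hP hQ]
  refine Finset.sum_congr rfl fun A hA ↦ ?_
  have hA' := (hmem A).2 (Finset.mem_filter.1 hA).2
  rw [ncard_intSet_of_mem_crapoInterval hE hB hA',
    rk'_univ_sub_rk'_of_mem_crapoInterval hE hB hA', ncard_extSet_of_mem_crapoInterval hE hB hA',
    ← ncard_coe_finset A, ncard_sub_rk'_of_mem_crapoInterval hE hB hA']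
  simp only [← Finset.coe_sdiff, ncard_coe_finset, hPc, hQc]
  ring

open scoped Classical in
theorem sum_activity_expansion_eq_sum_isBase [LinearOrder α] [Fintype α] [CommSemiring R]
    (hE : M.E = univ) (a b c d : R) :
    ∑ A : Finset α, a ^ (IntSet M ↑A).ncard * b ^ (M.rk' univ - M.rk' ↑A) *
      c ^ (ExtSet M ↑A).ncard * d ^ (#A - M.rk' ↑A) =
    ∑ B ∈ Finset.univ.filter (fun B : Finset α ↦ M.IsBase ↑B),
      (a + b) ^ (IntSet M ↑B).ncard * (c + d) ^ (ExtSet M ↑B).ncard := by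
  rw [sum_eq_sum_isBase_sum_crapoInterval hE]
  exact Finset.sum_congr rfl fun B hB ↦
    sum_crapoInterval_eq hE (Finset.mem_filter.1 hB).2 a b c d

end Sum

end Matroid

/-- The 4-variable expansion of the Tutte polynomial of a matroid:
`t(M; x+u, y+v) = Σ_{A⊆E} x^|Int_M(A)| u^{r(M)−r_M(A)} y^|Ext_M(A)| v^{|A|−r_M(A)}`. -/
theorem stmt3 {α : Type*} [Fintype α] [LinearOrder α] (M : Matroid α)
    (hME : M.E = Set.univ)
    {R : Type*} [CommRing R] (x u y v : R) :
    ∑ A : Finset α,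
        (x + u - 1) ^ (M.rk' Set.univ - M.rk' ↑A) *
          (y + v - 1) ^ (A.card - M.rk' ↑A) =
      ∑ A : Finset α,
        x ^ (IntSet M ↑A).ncard * u ^ (M.rk' Set.univ - M.rk' ↑A) *
          y ^ (ExtSet M ↑A).ncard * v ^ (A.card - M.rk' ↑A) := by
  have expansion := M.sum_activity_expansion_eq_sum_isBase (R := R) hME
  calc _ = ∑ A : Finset α, 1 ^ (IntSet M ↑A).ncard *
          (x + u - 1) ^ (M.rk' Set.univ - M.rk' ↑A) * 1 ^ (ExtSet M ↑A).ncard *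
          (y + v - 1) ^ (A.card - M.rk' ↑A) := by
        simp only [one_pow, one_mul, mul_one]
    _ = _ := expansion 1 (x + u - 1) 1 (y + v - 1)
    _ = _ := by simp only [add_sub_cancel]
    _ = _ := (expansion x u y v).symm
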